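/- (Efficient regime) Fix n ≥ 1, a unitary U on ℂ^(2^n) with Pauli instability 𝕀(U) ≤ log n, real numbers η > 0 and δ ∈ (0,1). Let Y₁,…,Y_N be independent identically distributed random variables, each distributed as |OTOC(U,P₁,P₂)| with (P₁,P₂) uniform on Q^{⊗n}×Q^{⊗n}. If N ≥ n²·ln(2/δ)/(2·(1 - e^{-η})²), then with probability at least 1-δ the empirical mean Ȳ = (1/N)·Σᵢ Yᵢ is strictly positive and |(-log Ȳ) - 𝕀(U)| < η; in particular a polynomial-in-n number of Pauli samples suffices. -/

import Mathlib

open Matrix Complex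

noncomputable section

/-- The four single-qubit Pauli matrices `I, X, Y, Z`. -/
def pauliMat : Fin 4 → Matrix (Fin 2) (Fin 2) ℂ
  | 0 => 1
  | 1 => !![0, 1; 1, 0]
  | 2 => !![0, -Complex.I; Complex.I, 0]
  | 3 => !![1, 0; 0, -1]

/-- The `k`-th binary digit of `i : Fin (2^n)`. -/
def qubit {n : ℕ} (k : Fin n) (i : Fin (2 ^ n)) : Fin 2 :=
  ⟨(i : ℕ) / 2 ^ (k : ℕ) % 2, Nat.mod_lt _ (by norm_num)⟩

/-- `n`-fold Kronecker product of single-qubit matrices, as a `2^n × 2^n` matrix. -/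
def nfold (n : ℕ) (f : Fin n → Matrix (Fin 2) (Fin 2) ℂ) :
    Matrix (Fin (2 ^ n)) (Fin (2 ^ n)) ℂ :=
  Matrix.of fun i j => ∏ k : Fin n, f k (qubit k i) (qubit k j)

/-- The `n`-qubit Pauli string `P⁽¹⁾ ⊗ ⋯ ⊗ P⁽ⁿ⁾` labelled by `s : Fin n → Fin 4`. -/
def PauliString (n : ℕ) (s : Fin n → Fin 4) : Matrix (Fin (2 ^ n)) (Fin (2 ^ n)) ℂ :=
  nfold n fun k => pauliMat (s k)

/-- The out-of-time-ordered correlator `2^{-n}·Tr(U†P₁U·P₂·U†P₁U·P₂)`. -/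
def OTOC (n : ℕ) (U P₁ P₂ : Matrix (Fin (2 ^ n)) (Fin (2 ^ n)) ℂ) : ℂ :=
  (2 ^ n : ℂ)⁻¹ * (Uᴴ * P₁ * U * P₂ * Uᴴ * P₁ * U * P₂).trace

/-- The Pauli instability `𝕀(U) = -log( 16^{-n} Σ_{P₁,P₂} |OTOC(U,P₁,P₂)| )`. -/
def pauliInstability (n : ℕ) (U : Matrix (Fin (2 ^ n)) (Fin (2 ^ n)) ℂ) : ℝ :=
  -Real.log ((16 ^ n : ℝ)⁻¹ * ∑ s₁ : Fin n → Fin 4, ∑ s₂ : Fin n → Fin 4,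
      ‖OTOC n U (PauliString n s₁) (PauliString n s₂)‖)

/-- `V` is Clifford: it maps every Pauli string to a Pauli string up to a phase. -/
def IsClifford (n : ℕ) (V : Matrix (Fin (2 ^ n)) (Fin (2 ^ n)) ℂ) : Prop :=
  ∀ s : Fin n → Fin 4, ∃ (s' : Fin n → Fin 4) (φ : ℝ),
    Vᴴ * PauliString n s * V = Complex.exp (-(φ * Complex.I)) • PauliString n s'



section Aux
open MeasureTheory ProbabilityTheory

lemma qubit_eq {n : ℕ} (k : Fin n) (i : Fin (2 ^ n)) :
    qubit k i = finFunctionFinEquiv.symm i k := by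
  apply Fin.ext
  simp [qubit, finFunctionFinEquiv, Equiv.ofRightInverseOfCardLE_symm_apply]

lemma qubit_inj {n : ℕ} {i j : Fin (2 ^ n)} (h : ∀ k, qubit k i = qubit k j) : i = j := by
  have : finFunctionFinEquiv.symm i = finFunctionFinEquiv.symm j := by
    funext k; rw [← qubit_eq, ← qubit_eq]; exact h k
  exact finFunctionFinEquiv.symm.injective this

lemma nfold_mul (n : ℕ) (f g : Fin n → Matrix (Fin 2) (Fin 2) ℂ) :
    nfold n f * nfold n g = nfold n (fun k => f k * g k) := by
  ext i j
  simp only [nfold, Matrix.mul_apply, Matrix.of_apply]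
  have step1 : (∑ x : Fin (2 ^ n), (∏ k, f k (qubit k i) (qubit k x)) *
      ∏ k, g k (qubit k x) (qubit k j)) =
      ∑ b : Fin n → Fin 2, ∏ k, f k (qubit k i) (b k) * g k (b k) (qubit k j) := by
    apply Fintype.sum_equiv finFunctionFinEquiv.symm
    intro x
    rw [← Finset.prod_mul_distrib]
    exact Finset.prod_congr rfl fun k _ => by rw [← qubit_eq]
  rw [step1, Finset.prod_univ_sum, Fintype.piFinset_univ]

lemma nfold_one (n : ℕ) : nfold n (fun _ => 1) = 1 := by
  ext i j
  by_cases h : i = j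
  · subst h
    simp [nfold, Matrix.one_apply]
  · have : ∃ k, qubit k i ≠ qubit k j := by
      by_contra hc
      push_neg at hc
      exact h (qubit_inj hc)
    obtain ⟨k, hk⟩ := this
    rw [Matrix.one_apply_ne h]
    simp only [nfold, Matrix.of_apply]
    exact Finset.prod_eq_zero (Finset.mem_univ k) (Matrix.one_apply_ne hk)

lemma nfold_conjTranspose (n : ℕ) (f : Fin n → Matrix (Fin 2) (Fin 2) ℂ) :
    (nfold n f)ᴴ = nfold n (fun k => (f k)ᴴ) := by
  ext i j
  simp [nfold, Matrix.conjTranspose_apply, map_prod]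

lemma pauli_unitary (a : Fin 4) : (pauliMat a)ᴴ * pauliMat a = 1 := by
  fin_cases a <;>
  · simp only [pauliMat]
    ext i j
    fin_cases i <;> fin_cases j <;>
      simp [Matrix.mul_apply, Fin.sum_univ_two, Matrix.one_apply, Complex.ext_iff]

lemma pauliString_mem_unitary (n : ℕ) (s : Fin n → Fin 4) :
    PauliString n s ∈ Matrix.unitaryGroup (Fin (2 ^ n)) ℂ := by
  rw [Matrix.mem_unitaryGroup_iff']
  rw [Matrix.star_eq_conjTranspose, PauliString, nfold_conjTranspose, nfold_mul]
  rw [show (fun k => (pauliMat (s k))ᴴ * pauliMat (s k)) = fun _ => (1 : Matrix (Fin 2) (Fin 2) ℂ)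
    from funext fun k => pauli_unitary (s k)]
  exact nfold_one n

lemma pauliString_zero (n : ℕ) : PauliString n (fun _ => 0) = 1 := by
  rw [PauliString]
  rw [show (fun k : Fin n => pauliMat ((fun _ => (0 : Fin 4)) k)) =
    fun _ => (1 : Matrix (Fin 2) (Fin 2) ℂ) from rfl]
  exact nfold_one n

lemma trace_sq_unitary {m : ℕ} (W : Matrix (Fin m) (Fin m) ℂ)
    (hW : W ∈ Matrix.unitaryGroup (Fin m) ℂ) :
    ‖(W * W).trace‖ ≤ m := by
  have hsW : Wᴴ * W = 1 := by
    rw [← Matrix.star_eq_conjTranspose]; exact Matrix.mem_unitaryGroup_iff'.mp hW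
  -- column sums of squared abs
  have hcol : ∀ i, ∑ j, ‖W j i‖ ^ 2 = 1 := by
    intro i
    have h1 : (Wᴴ * W) i i = 1 := by rw [hsW]; simp [Matrix.one_apply]
    have h2 : (Wᴴ * W) i i = ∑ j, (starRingEnd ℂ) (W j i) * W j i := by
      simp [Matrix.mul_apply, Matrix.conjTranspose_apply]
    have h3 : ∑ j, ((‖W j i‖ : ℂ)) ^ 2 = 1 := by
      rw [← h1, h2]
      refine Finset.sum_congr rfl fun j _ => ?_
      rw [← Complex.normSq_eq_conj_mul_self, ← Complex.sq_norm]
      push_cast; ring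
    have h4 : ((∑ j, ‖W j i‖ ^ 2 : ℝ) : ℂ) = 1 := by push_cast; exact h3
    exact_mod_cast h4
  have htot : ∑ p : Fin m × Fin m, ‖W p.2 p.1‖ ^ 2 = m := by
    rw [Fintype.sum_prod_type]
    simp [hcol]
  have htot' : ∑ p : Fin m × Fin m, ‖W p.1 p.2‖ ^ 2 = m := by
    rw [← htot]
    exact Fintype.sum_equiv (Equiv.prodComm _ _) _ _ (fun p => rfl)
  have htr : (W * W).trace = ∑ p : Fin m × Fin m, W p.1 p.2 * W p.2 p.1 := by
    rw [Matrix.trace, Fintype.sum_prod_type]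
    simp [Matrix.diag, Matrix.mul_apply]
  rw [htr]
  calc ‖∑ p : Fin m × Fin m, W p.1 p.2 * W p.2 p.1‖
      ≤ ∑ p : Fin m × Fin m, ‖W p.1 p.2‖ * ‖W p.2 p.1‖ := by
        refine (norm_sum_le _ _).trans_eq ?_
        exact Finset.sum_congr rfl fun p _ => norm_mul _ _
    _ ≤ m := by
        have hCS := Finset.sum_mul_sq_le_sq_mul_sq Finset.univ
          (fun p : Fin m × Fin m => ‖W p.1 p.2‖)
          (fun p : Fin m × Fin m => ‖W p.2 p.1‖)
        rw [htot, htot'] at hCS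
        have hnn : (0:ℝ) ≤ ∑ p : Fin m × Fin m,
            ‖W p.1 p.2‖ * ‖W p.2 p.1‖ := by positivity
        nlinarith [hCS, hnn, Nat.cast_nonneg (α := ℝ) m]

lemma otoc_abs_le_one (n : ℕ) (U : Matrix (Fin (2 ^ n)) (Fin (2 ^ n)) ℂ)
    (hU : U ∈ Matrix.unitaryGroup (Fin (2 ^ n)) ℂ) (s₁ s₂ : Fin n → Fin 4) :
    ‖OTOC n U (PauliString n s₁) (PauliString n s₂)‖ ≤ 1 := by
  set W := Uᴴ * PauliString n s₁ * U * PauliString n s₂ with hWdef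
  have hWmem : W ∈ Matrix.unitaryGroup (Fin (2 ^ n)) ℂ := by
    rw [hWdef]
    refine mul_mem (mul_mem (mul_mem ?_ (pauliString_mem_unitary n s₁)) hU)
      (pauliString_mem_unitary n s₂)
    rw [← Matrix.star_eq_conjTranspose]
    exact Unitary.star_mem hU
  have hM : Uᴴ * PauliString n s₁ * U * PauliString n s₂ * Uᴴ * PauliString n s₁ * U *
      PauliString n s₂ = W * W := by
    rw [hWdef]; noncomm_ring
  rw [OTOC, hM, norm_mul, norm_inv]
  have h2 : ‖(2:ℂ) ^ n‖ = (2:ℝ) ^ n := by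
    rw [norm_pow]
    norm_num
  have htr := trace_sq_unitary W hWmem
  have hpos : (0:ℝ) < (2:ℝ) ^ n := by positivity
  rw [h2, inv_mul_le_iff₀ hpos]
  calc ‖(W * W).trace‖ ≤ ((2:ℕ) ^ n : ℕ) := htr
    _ = (2:ℝ) ^ n := by push_cast; ring
    _ ≤ (2:ℝ) ^ n * 1 := by linarith

lemma otoc_one (n : ℕ) (U : Matrix (Fin (2 ^ n)) (Fin (2 ^ n)) ℂ)
    (hU : U ∈ Matrix.unitaryGroup (Fin (2 ^ n)) ℂ) :
    OTOC n U 1 1 = 1 := by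
  have h1 : Uᴴ * U = 1 := by
    rw [← Matrix.star_eq_conjTranspose]; exact Matrix.mem_unitaryGroup_iff'.mp hU
  have : Uᴴ * (1:Matrix (Fin (2^n)) (Fin (2^n)) ℂ) * U * 1 * Uᴴ * 1 * U * 1 = 1 := by
    rw [mul_one, mul_one, mul_one, mul_one, mul_assoc, h1, mul_one]
  rw [OTOC, this, Matrix.trace_one]
  have hc : ((Fintype.card (Fin (2 ^ n))) : ℂ) = (2:ℂ) ^ n := by
    rw [Fintype.card_fin]; push_cast; ring
  rw [hc, inv_mul_cancel₀ (pow_ne_zero _ two_ne_zero)]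

lemma hoeffding_D_pos (m : ℝ) (hm0 : 0 ≤ m) (hm1 : m ≤ 1) (t : ℝ) :
    0 < 1 - m + m * Real.exp t := by
  rcases le_or_gt (Real.exp t) 1 with h | h
  · nlinarith [Real.exp_pos t]
  · nlinarith [Real.exp_pos t]

lemma hoeffding_core (m : ℝ) (hm0 : 0 ≤ m) (hm1 : m ≤ 1) (t : ℝ) :
    1 + m * (Real.exp t - 1) ≤ Real.exp (t * m + t ^ 2 / 8) := by
  set D : ℝ → ℝ := fun u => 1 - m + m * Real.exp u with hDdef
  have hD : ∀ u, 0 < D u := fun u => hoeffding_D_pos m hm0 hm1 u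
  set G : ℝ → ℝ := fun u => m + u / 4 - m * Real.exp u / D u with hGdef
  set F : ℝ → ℝ := fun u => u * m + u ^ 2 / 8 - Real.log (D u) with hFdef
  have hasD : ∀ u, HasDerivAt D (m * Real.exp u) u := by
    intro u
    exact ((Real.hasDerivAt_exp u).const_mul m).const_add (1 - m)
  have hasG : ∀ u, HasDerivAt G (1 / 4 -
      (m * Real.exp u * D u - m * Real.exp u * (m * Real.exp u)) / (D u) ^ 2) u := by
    intro u
    have h1 : HasDerivAt (fun v => m + v / 4) (1 / 4) u := by
      simpa using ((hasDerivAt_id u).div_const 4).const_add m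
    have h2 : HasDerivAt (fun v => m * Real.exp v / D v)
        ((m * Real.exp u * D u - m * Real.exp u * (m * Real.exp u)) / (D u) ^ 2) u := by
      exact ((Real.hasDerivAt_exp u).const_mul m).div (hasD u) (hD u).ne'
    exact h1.sub h2
  have hasF : ∀ u, HasDerivAt F (G u) u := by
    intro u
    have h1 : HasDerivAt (fun v => v * m + v ^ 2 / 8) (m + u / 4) u := by
      have := ((hasDerivAt_pow 2 u).div_const 8).const_add (u * m)
      have h2 : HasDerivAt (fun v => v * m) m u := by
        simpa using (hasDerivAt_id u).mul_const m
      have h3 := h2.add ((hasDerivAt_pow 2 u).div_const 8)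
      exact h3.congr_deriv (by rw [show (2:ℕ) - 1 = 1 from rfl]; push_cast; ring)
    have h4 : HasDerivAt (fun v => Real.log (D v)) (m * Real.exp u / D u) u :=
      (hasD u).log (hD u).ne'
    exact h1.sub h4
  have hG' : ∀ u, 0 ≤ 1 / 4 -
      (m * Real.exp u * D u - m * Real.exp u * (m * Real.exp u)) / (D u) ^ 2 := by
    intro u
    have hq : m * Real.exp u ≤ D u := by
      simp only [hDdef]; nlinarith [Real.exp_pos u]
    have hD2 : 0 < (D u) ^ 2 := pow_pos (hD u) 2
    rw [sub_nonneg, div_le_iff₀ hD2]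
    have key : ∀ d q : ℝ, q * d - q * q ≤ 1 / 4 * d ^ 2 := by
      intro d q; nlinarith [sq_nonneg (d - 2 * q)]
    exact key (D u) (m * Real.exp u)
  have hGmono : Monotone G :=
    monotone_of_deriv_nonneg (fun u => (hasG u).differentiableAt)
      (fun u => by rw [(hasG u).deriv]; exact hG' u)
  have hG0 : G 0 = 0 := by
    simp only [hGdef, hDdef, Real.exp_zero, mul_one]
    norm_num
  have hF0 : F 0 = 0 := by
    simp only [hFdef, hDdef, Real.exp_zero, mul_one]
    norm_num
  have hFnonneg : ∀ u, 0 ≤ F u := by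
    intro u
    rcases le_total 0 u with h | h
    · have hdiffF : Differentiable ℝ F := fun v => (hasF v).differentiableAt
      have hmono : MonotoneOn F (Set.Ici 0) :=
        monotoneOn_of_deriv_nonneg (convex_Ici 0) hdiffF.continuous.continuousOn
          (fun x _ => (hdiffF x).differentiableWithinAt)
          (fun x hx => by
            rw [(hasF x).deriv]
            have hx0 : (0:ℝ) ≤ x := le_of_lt (by simpa using hx)
            calc (0:ℝ) = G 0 := hG0.symm
              _ ≤ G x := hGmono hx0)
      rw [← hF0]
      exact hmono (Set.self_mem_Ici) h h
    · have hdiffF : Differentiable ℝ F := fun v => (hasF v).differentiableAt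
      have hmono : AntitoneOn F (Set.Iic 0) :=
        antitoneOn_of_deriv_nonpos (convex_Iic 0) hdiffF.continuous.continuousOn
          (fun x _ => (hdiffF x).differentiableWithinAt)
          (fun x hx => by
            rw [(hasF x).deriv]
            have hx0 : x ≤ (0:ℝ) := le_of_lt (by simpa using hx)
            calc G x ≤ G 0 := hGmono hx0
              _ = 0 := hG0)
      rw [← hF0]
      exact hmono h Set.self_mem_Iic h
  have hlog : Real.log (D t) ≤ t * m + t ^ 2 / 8 := by
    have := hFnonneg t
    simp only [hFdef] at this
    linarith
  calc 1 + m * (Real.exp t - 1) = D t := by simp only [hDdef]; ring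
    _ = Real.exp (Real.log (D t)) := (Real.exp_log (hD t)).symm
    _ ≤ Real.exp (t * m + t ^ 2 / 8) := Real.exp_le_exp.mpr hlog

lemma exp_mul_le_of_mem_Icc {x t : ℝ} (hx : x ∈ Set.Icc (0:ℝ) 1) :
    Real.exp (t * x) ≤ 1 + x * (Real.exp t - 1) := by
  obtain ⟨h0, h1⟩ := hx
  have := convexOn_exp.2 (Set.mem_univ (0:ℝ)) (Set.mem_univ t)
    (by linarith : (0:ℝ) ≤ 1 - x) h0 (by ring)
  simp only [smul_eq_mul, mul_zero, zero_add, Real.exp_zero] at this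
  calc Real.exp (t * x) = Real.exp ((1 - x) * 0 + x * t) := by ring_nf
    _ ≤ (1 - x) * 1 + x * Real.exp t := by simpa [mul_comm] using this
    _ = 1 + x * (Real.exp t - 1) := by ring

lemma exp_mul_bdd_integrable {Ω : Type*} [MeasurableSpace Ω] (P : Measure Ω)
    [IsProbabilityMeasure P] (Y : Ω → ℝ) (hmeas : Measurable Y)
    (hbd : ∀ᵐ ω ∂P, Y ω ∈ Set.Icc (0:ℝ) 1) (t : ℝ) :
    Integrable (fun ω => Real.exp (t * Y ω)) P := by
  refine Integrable.mono' (integrable_const (Real.exp |t|))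
    ((Real.measurable_exp.comp (measurable_const.mul hmeas)).aestronglyMeasurable) ?_
  filter_upwards [hbd] with ω hω
  rw [Real.norm_eq_abs, abs_of_pos (Real.exp_pos _)]
  apply Real.exp_le_exp.mpr
  obtain ⟨h0, h1⟩ := hω
  calc t * Y ω ≤ |t * Y ω| := le_abs_self _
    _ = |t| * |Y ω| := abs_mul t (Y ω)
    _ ≤ |t| * 1 := by
        apply mul_le_mul_of_nonneg_left _ (abs_nonneg t)
        rw [_root_.abs_of_nonneg h0]; exact h1
    _ = |t| := mul_one _

lemma chernoff_two_sided {Ω : Type*} [MeasurableSpace Ω] (P : Measure Ω)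
    [IsProbabilityMeasure P] {N : ℕ} (Y : Fin N → Ω → ℝ)
    (hmeas : ∀ i, Measurable (Y i))
    (hindep : iIndepFun Y P)
    (hbd : ∀ i, ∀ᵐ ω ∂P, Y i ω ∈ Set.Icc (0:ℝ) 1)
    (m : ℝ)
    (hmgf : ∀ i t, mgf (Y i) P t ≤ Real.exp (t * m + t ^ 2 / 8))
    (a : ℝ) (ha : 0 < a) :
    (P {ω | (N:ℝ) * m + N * a ≤ ∑ i, Y i ω}).toReal ≤ Real.exp (-2 * N * a ^ 2) ∧
    (P {ω | ∑ i, Y i ω ≤ (N:ℝ) * m - N * a}).toReal ≤ Real.exp (-2 * N * a ^ 2) := by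
  have hint : ∀ (t : ℝ) (i : Fin N), Integrable (fun ω => Real.exp (t * Y i ω)) P :=
    fun t i => exp_mul_bdd_integrable P (Y i) (hmeas i) (hbd i) t
  have hsum_eq : ∀ ω, (∑ i, Y i) ω = ∑ i, Y i ω := fun ω => by simp [Finset.sum_apply]
  have hintsum : ∀ t : ℝ, Integrable (fun ω => Real.exp (t * (∑ i, Y i) ω)) P := by
    intro t
    exact hindep.integrable_exp_mul_sum hmeas (fun i _ => hint t i)
  have hmgfsum : ∀ t : ℝ, mgf (∑ i, Y i) P t ≤ Real.exp (N * (t * m + t ^ 2 / 8)) := by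
    intro t
    rw [hindep.mgf_sum hmeas Finset.univ]
    calc ∏ i : Fin N, mgf (Y i) P t ≤ ∏ _i : Fin N, Real.exp (t * m + t ^ 2 / 8) :=
          Finset.prod_le_prod (fun i _ => mgf_nonneg) (fun i _ => hmgf i t)
      _ = Real.exp (N * (t * m + t ^ 2 / 8)) := by
          rw [Finset.prod_const, ← Real.exp_nat_mul]; simp
  constructor
  · have h := measure_ge_le_exp_mul_mgf (X := ∑ i, Y i) (μ := P) ((N:ℝ) * m + N * a)
      (by positivity : (0:ℝ) ≤ 4 * a) (hintsum (4 * a))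
    have hset : {ω | (N:ℝ) * m + N * a ≤ ∑ i, Y i ω} =
        {ω | (N:ℝ) * m + N * a ≤ (∑ i, Y i) ω} := by
      ext ω; simp [hsum_eq]
    rw [hset]
    refine h.trans ?_
    calc Real.exp (-(4 * a) * ((N:ℝ) * m + N * a)) * mgf (∑ i, Y i) P (4 * a)
        ≤ Real.exp (-(4 * a) * ((N:ℝ) * m + N * a)) *
          Real.exp (N * ((4 * a) * m + (4 * a) ^ 2 / 8)) := by
          exact mul_le_mul_of_nonneg_left (hmgfsum (4 * a)) (Real.exp_pos _).le
      _ = Real.exp (-2 * N * a ^ 2) := by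
          rw [← Real.exp_add]; congr 1; ring
  · have h := measure_le_le_exp_mul_mgf (X := ∑ i, Y i) (μ := P) ((N:ℝ) * m - N * a)
      (by linarith : -(4 * a) ≤ 0) (hintsum (-(4 * a)))
    have hset : {ω | ∑ i, Y i ω ≤ (N:ℝ) * m - N * a} =
        {ω | (∑ i, Y i) ω ≤ (N:ℝ) * m - N * a} := by
      ext ω; simp [hsum_eq]
    rw [hset]
    refine h.trans ?_
    calc Real.exp (-(-(4 * a)) * ((N:ℝ) * m - N * a)) * mgf (∑ i, Y i) P (-(4 * a))
        ≤ Real.exp (-(-(4 * a)) * ((N:ℝ) * m - N * a)) *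
          Real.exp (N * ((-(4 * a)) * m + (-(4 * a)) ^ 2 / 8)) := by
          exact mul_le_mul_of_nonneg_left (hmgfsum (-(4 * a))) (Real.exp_pos _).le
      _ = Real.exp (-2 * N * a ^ 2) := by
          rw [← Real.exp_add]; congr 1; ring

end Aux


open MeasureTheory ProbabilityTheory

set_option maxHeartbeats 1000000 in
/-- Efficient regime: Fix `n ≥ 1` and a unitary `U` with
`𝕀(U) ≤ log n`.  If `Y₁,…,Y_N` are i.i.d., each distributed as `|OTOC(U,P₁,P₂)|` with
`(P₁,P₂)` uniform, and `N ≥ n²·ln(2/δ)/(2(1-e^{-η})²)`, then with probability at least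
`1-δ` the empirical mean `Ȳ` is strictly positive and `|(-log Ȳ) - 𝕀(U)| < η`. -/
theorem pauli_sample_complexity_efficient {Ω : Type*} [MeasurableSpace Ω]
    (P : Measure Ω) [IsProbabilityMeasure P]
    (n : ℕ) (hn : 1 ≤ n) (U : Matrix (Fin (2 ^ n)) (Fin (2 ^ n)) ℂ)
    (hU : U ∈ Matrix.unitaryGroup (Fin (2 ^ n)) ℂ)
    (hI : pauliInstability n U ≤ Real.log n)
    (η δ : ℝ) (hη : 0 < η) (hδ0 : 0 < δ) (hδ1 : δ < 1)
    (N : ℕ) (Y : Fin N → Ω → ℝ)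
    (hmeas : ∀ i, Measurable (Y i))
    (hindep : iIndepFun Y P)
    (hdist : ∀ i, Measure.map (Y i) P =
      Measure.map
        (fun s : (Fin n → Fin 4) × (Fin n → Fin 4) =>
          ‖OTOC n U (PauliString n s.1) (PauliString n s.2)‖)
        (PMF.uniformOfFintype ((Fin n → Fin 4) × (Fin n → Fin 4))).toMeasure)
    (hN : (N : ℝ) ≥ (n : ℝ) ^ 2 * Real.log (2 / δ) /
      (2 * (1 - Real.exp (-η)) ^ 2)) :
    P {ω | 0 < (∑ i, Y i ω) / N ∧
        |(-Real.log ((∑ i, Y i ω) / N)) - pauliInstability n U| < η} ≥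
      ENNReal.ofReal (1 - δ) := by
  classical
  set f : (Fin n → Fin 4) × (Fin n → Fin 4) → ℝ := fun s => ‖OTOC n U (PauliString n s.1) (PauliString n s.2)‖
    with hf
  have hfmeas : Measurable f := measurable_of_countable f
  have hf01 : ∀ s, f s ∈ Set.Icc (0:ℝ) 1 :=
    fun s => ⟨norm_nonneg _, otoc_abs_le_one n U hU s.1 s.2⟩
  set m : ℝ := (16 ^ n : ℝ)⁻¹ * ∑ s₁ : Fin n → Fin 4, ∑ s₂ : Fin n → Fin 4,
      ‖OTOC n U (PauliString n s₁) (PauliString n s₂)‖ with hm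
  have hinst : pauliInstability n U = -Real.log m := rfl
  -- cardinality
  have hcard : (Fintype.card ((Fin n → Fin 4) × (Fin n → Fin 4)) : ℝ) = 16 ^ n := by
    rw [Fintype.card_prod, Fintype.card_fun]
    push_cast
    simp [Fintype.card_fin]
    rw [← mul_pow]
    norm_num
  have hcard_pos : (0:ℝ) < (Fintype.card ((Fin n → Fin 4) × (Fin n → Fin 4)) : ℝ) := by
    rw [hcard]; positivity
  set c : ℝ := (Fintype.card ((Fin n → Fin 4) × (Fin n → Fin 4)) : ℝ)⁻¹ with hc
  have hc_pos : 0 < c := inv_pos.mpr hcard_pos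
  have hm_sum : m = ∑ s : (Fin n → Fin 4) × (Fin n → Fin 4), c * f s := by
    rw [hm, hc, hcard, ← Finset.mul_sum]
    congr 1
    rw [Fintype.sum_prod_type]
  have hsumc : ∑ _s : (Fin n → Fin 4) × (Fin n → Fin 4), c = 1 := by
    rw [Finset.sum_const, hc, nsmul_eq_mul]
    field_simp
    rw [Finset.card_univ]
  -- m in (0, 1]
  have hm1 : m ≤ 1 := by
    rw [hm_sum, ← hsumc]
    exact Finset.sum_le_sum fun s _ => by
      have := (hf01 s).2
      nlinarith [hc_pos]
  have hm_pos : 0 < m := by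
    have h1 : f ((fun _ => 0), (fun _ => 0)) = 1 := by
      rw [hf]
      simp only
      rw [pauliString_zero, otoc_one n U hU]
      simp
    have h2 : (1:ℝ) ≤ ∑ s : (Fin n → Fin 4) × (Fin n → Fin 4), f s := by
      rw [← h1]
      exact Finset.single_le_sum (fun s _ => (hf01 s).1) (Finset.mem_univ _)
    have h3 : ∑ s : (Fin n → Fin 4) × (Fin n → Fin 4), c * f s ≥ c * 1 := by
      rw [← Finset.mul_sum]
      nlinarith
    rw [hm_sum]
    nlinarith
  -- m ≥ 1/n
  have hn_pos : (0:ℝ) < n := by exact_mod_cast hn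
  have hm_ge : (n:ℝ)⁻¹ ≤ m := by
    have h1 : -Real.log m ≤ Real.log n := hinst ▸ hI
    have h2 : Real.log ((n:ℝ)⁻¹) ≤ Real.log m := by
      rw [Real.log_inv]; linarith
    exact (Real.log_le_log_iff (inv_pos.mpr hn_pos) hm_pos).mp h2
  -- Y i ∈ [0,1] a.e.
  have hbd : ∀ i, ∀ᵐ ω ∂P, Y i ω ∈ Set.Icc (0:ℝ) 1 := by
    intro i
    rw [ae_iff]
    have hset : {ω | ¬ Y i ω ∈ Set.Icc (0:ℝ) 1} = Y i ⁻¹' (Set.Icc (0:ℝ) 1)ᶜ := rfl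
    rw [hset, ← Measure.map_apply (hmeas i) measurableSet_Icc.compl, hdist i,
      Measure.map_apply hfmeas measurableSet_Icc.compl]
    have : f ⁻¹' (Set.Icc (0:ℝ) 1)ᶜ = ∅ := by
      rw [Set.eq_empty_iff_forall_notMem]
      intro s hs
      exact hs (hf01 s)
    rw [this]
    simp
  -- mgf bound
  have hmgf : ∀ i t, mgf (Y i) P t ≤ Real.exp (t * m + t ^ 2 / 8) := by
    intro i t
    have hcont : Continuous fun x : ℝ => Real.exp (t * x) :=
      Real.continuous_exp.comp (continuous_const.mul continuous_id)
    have h1 : mgf (Y i) P t = ∫ x, Real.exp (t * x) ∂(Measure.map (Y i) P) :=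
      (integral_map (hmeas i).aemeasurable hcont.aestronglyMeasurable).symm
    have h2 : mgf (Y i) P t = ∑ s : (Fin n → Fin 4) × (Fin n → Fin 4), c * Real.exp (t * f s) := by
      rw [h1, hdist i, integral_map hfmeas.aemeasurable hcont.aestronglyMeasurable,
        PMF.integral_eq_sum]
      refine Finset.sum_congr rfl fun s _ => ?_
      rw [PMF.uniformOfFintype_apply, smul_eq_mul]
      congr 1
      rw [hc]
      rw [ENNReal.toReal_inv, ENNReal.toReal_natCast]
    rw [h2]
    calc ∑ s : (Fin n → Fin 4) × (Fin n → Fin 4), c * Real.exp (t * f s)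
        ≤ ∑ s : (Fin n → Fin 4) × (Fin n → Fin 4), c * (1 + f s * (Real.exp t - 1)) :=
          Finset.sum_le_sum fun s _ =>
            mul_le_mul_of_nonneg_left (exp_mul_le_of_mem_Icc (hf01 s)) hc_pos.le
      _ = 1 + m * (Real.exp t - 1) := by
          have hstep : ∑ s : (Fin n → Fin 4) × (Fin n → Fin 4), c * (1 + f s * (Real.exp t - 1))
              = (∑ _s : (Fin n → Fin 4) × (Fin n → Fin 4), c) +
                (∑ s : (Fin n → Fin 4) × (Fin n → Fin 4), c * f s) * (Real.exp t - 1) := by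
            rw [Finset.sum_mul, ← Finset.sum_add_distrib]
            exact Finset.sum_congr rfl fun s _ => by ring
          rw [hstep, hsumc, ← hm_sum]
      _ ≤ Real.exp (t * m + t ^ 2 / 8) :=
          hoeffding_core m (le_of_lt hm_pos) hm1 t
  -- parameters
  set e : ℝ := Real.exp (-η) with he
  have he1 : e < 1 := by
    rw [he]
    calc Real.exp (-η) < Real.exp 0 := Real.exp_lt_exp.mpr (by linarith)
      _ = 1 := Real.exp_zero
  have he_pos : 0 < e := Real.exp_pos _
  set a : ℝ := m * (1 - e) with ha_def
  have ha : 0 < a := by rw [ha_def]; nlinarith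
  -- tail bound numbers
  have hL_pos : 0 < Real.log (2 / δ) := Real.log_pos (by rw [lt_div_iff₀ hδ0]; linarith)
  set L := Real.log (2 / δ) with hL
  have hc1 : 0 < 1 - e := by linarith
  have hexp_tail : Real.exp (-2 * N * a ^ 2) ≤ δ / 2 := by
    have hmn : (1:ℝ) ≤ m * n := by
      rw [← div_le_iff₀ hn_pos, one_div]
      exact hm_ge
    have h1 : (1 - e) / n ≤ a := by
      rw [ha_def, div_le_iff₀ hn_pos]
      nlinarith [hmn, hc1]
    have h2 : ((1 - e) / n) ^ 2 ≤ a ^ 2 := by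
      apply pow_le_pow_left₀ (by positivity) h1
    have h3 : (N:ℝ) * (((1 - e) / n) ^ 2) ≥ L / 2 := by
      have hrhs : (n : ℝ) ^ 2 * L / (2 * (1 - e) ^ 2) * (((1 - e) / n) ^ 2) = L / 2 := by
        field_simp
      calc (N:ℝ) * (((1 - e) / n) ^ 2)
          ≥ (n : ℝ) ^ 2 * L / (2 * (1 - e) ^ 2) * (((1 - e) / n) ^ 2) := by
            apply mul_le_mul_of_nonneg_right hN (by positivity)
        _ = L / 2 := hrhs
    have h4 : L ≤ 2 * N * a ^ 2 := by
      have : (N:ℝ) * a ^ 2 ≥ (N:ℝ) * (((1 - e) / n) ^ 2) :=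
        mul_le_mul_of_nonneg_left h2 (Nat.cast_nonneg N)
      linarith
    calc Real.exp (-2 * N * a ^ 2) ≤ Real.exp (-L) := by
          apply Real.exp_le_exp.mpr; linarith
      _ = δ / 2 := by
          rw [hL, Real.exp_neg, Real.exp_log (by positivity), inv_div]
  -- chernoff
  obtain ⟨hup, hlo⟩ := chernoff_two_sided P Y hmeas hindep hbd m hmgf a ha
  -- the good event
  set X : Ω → ℝ := fun ω => ∑ i, Y i ω with hX
  have hXmeas : Measurable X := Finset.measurable_sum _ fun i _ => hmeas i
  set E : Set Ω := {ω | (N:ℝ) * m - N * a < X ω ∧ X ω < (N:ℝ) * m + N * a} with hE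
  have hEmeas : MeasurableSet E :=
    (measurableSet_lt measurable_const hXmeas).inter
      (measurableSet_lt hXmeas measurable_const)
  have hN_pos : (0:ℝ) < N := by
    have : (0:ℝ) < (n : ℝ) ^ 2 * L / (2 * (1 - e) ^ 2) := by positivity
    linarith [hN]
  -- inclusion
  have hsub : E ⊆ {ω | 0 < (∑ i, Y i ω) / N ∧
      |(-Real.log ((∑ i, Y i ω) / N)) - pauliInstability n U| < η} := by
    intro ω hω
    obtain ⟨h1, h2⟩ := hω
    have hYb1 : m - a < X ω / N := by
      rw [lt_div_iff₀ hN_pos]; nlinarith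
    have hYb2 : X ω / N < m + a := by
      rw [div_lt_iff₀ hN_pos]; nlinarith
    have hma : m - a = m * e := by rw [ha_def]; ring
    have hpos : 0 < X ω / N := by
      have : 0 < m * e := by positivity
      nlinarith [hYb1]
    constructor
    · exact hpos
    · rw [hinst, abs_lt]
      have hlog1 : Real.log m - η < Real.log (X ω / N) := by
        have : m * e < X ω / N := by rw [← hma]; exact hYb1
        have hlt := Real.log_lt_log (by positivity) this
        rw [Real.log_mul (ne_of_gt hm_pos) (ne_of_gt he_pos), he, Real.log_exp] at hlt
        linarith
      have hlog2 : Real.log (X ω / N) < Real.log m + η := by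
        have hle : m + a ≤ m * Real.exp η := by
          have hinv : e * Real.exp η = 1 := by
            rw [he, ← Real.exp_add]; simp
          nlinarith [sq_nonneg (Real.exp η - 1), Real.exp_pos η]
        have : X ω / N < m * Real.exp η := lt_of_lt_of_le hYb2 hle
        have hlt := Real.log_lt_log hpos this
        rw [Real.log_mul (ne_of_gt hm_pos) (ne_of_gt (Real.exp_pos η)), Real.log_exp] at hlt
        linarith
      constructor
      · -- -η < -log Ȳ + log m
        linarith
      · linarith
  refine le_trans ?_ (measure_mono hsub)
  -- complement bound
  have hcompl : Eᶜ ⊆ {ω | X ω ≤ (N:ℝ) * m - N * a} ∪ {ω | (N:ℝ) * m + N * a ≤ X ω} := by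
    intro ω hω
    rw [hE] at hω
    simp only [Set.mem_compl_iff, Set.mem_setOf_eq, not_and_or, not_lt] at hω
    rcases hω with h | h
    · exact Or.inl h
    · exact Or.inr h
  have hPEc : P Eᶜ ≤ ENNReal.ofReal δ := by
    calc P Eᶜ ≤ P ({ω | X ω ≤ (N:ℝ) * m - N * a} ∪ {ω | (N:ℝ) * m + N * a ≤ X ω}) :=
          measure_mono hcompl
      _ ≤ P {ω | X ω ≤ (N:ℝ) * m - N * a} + P {ω | (N:ℝ) * m + N * a ≤ X ω} :=
          measure_union_le _ _
      _ ≤ ENNReal.ofReal (δ / 2) + ENNReal.ofReal (δ / 2) := by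
          gcongr
          · rw [← ENNReal.ofReal_toReal (measure_ne_top P _)]
            exact ENNReal.ofReal_le_ofReal (le_trans hlo hexp_tail)
          · rw [← ENNReal.ofReal_toReal (measure_ne_top P _)]
            exact ENNReal.ofReal_le_ofReal (le_trans hup hexp_tail)
      _ = ENNReal.ofReal δ := by
          rw [← ENNReal.ofReal_add (by linarith) (by linarith)]
          norm_num
  have hPE : P E ≥ ENNReal.ofReal (1 - δ) := by
    have h1 : P Eᶜ = 1 - P E := prob_compl_eq_one_sub hEmeas
    have h2 : P E = 1 - P Eᶜ := by
      rw [h1, ENNReal.sub_sub_cancel ENNReal.one_ne_top prob_le_one]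
    rw [h2]
    calc ENNReal.ofReal (1 - δ) = 1 - ENNReal.ofReal δ := by
          rw [← ENNReal.ofReal_one, ← ENNReal.ofReal_sub _ hδ0.le]
      _ ≤ 1 - P Eᶜ := tsub_le_tsub_left hPEc 1
  exact hPE

end
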